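/- Suppose g : ℕ → ℝ satisfies g(0) = g(1) = 1 and, for n ≥ 2, g(n) = 1 + Σ_{i=1}^{n-1} [(1-p)^{C(i,2)} - (1-p)^{C(i+1,2)}] g(n-i). Then the formal power series G(x) = Σ_{n≥0} g(n)x^n satisfies (G(x) - 1)(1 - A_p(x) + B_p(x)) = x/(1-x), and consequently G(x) = 1 + x/((1-x)^2 B_p(x)). -/

import Mathlib

/-!
Put `D = A_p - B_p`: its `i`-th coefficient is the weight of `g (n - i)` in the recurrence and its
constant term vanishes, so the coefficient of `x^n` in `D (G - 1)` is exactly the sum in the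
recurrence. Hence every positive coefficient of `(G - 1)(1 - D)` is `1`, i.e.
`(G - 1)(1 - D) = x / (1 - x)`. Since `A_p = 1 + x B_p`, `1 - D = (1 - x) B_p`, and dividing by
`(1 - x)^2 B_p`, whose constant term is `1`, gives the closed form.
-/

/-- `A_p(x) = Σ_{n≥0} (1-p)^{C(n,2)} x^n` as a formal power series over `ℝ`. -/
noncomputable def Aps (p : ℝ) : PowerSeries ℝ :=
  PowerSeries.mk fun n => (1 - p) ^ (n.choose 2)

/-- `B_p(x) = Σ_{n≥0} (1-p)^{C(n+1,2)} x^n` as a formal power series over `ℝ`. -/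
noncomputable def Bps (p : ℝ) : PowerSeries ℝ :=
  PowerSeries.mk fun n => (1 - p) ^ ((n + 1).choose 2)

open Finset PowerSeries

namespace PowerSeries

variable {R : Type*} [CommRing R]

theorem coeff_mul_eq_sum_Icc_of_constantCoeff_eq_zero {f g : R⟦X⟧} (hf : constantCoeff f = 0)
    (hg : constantCoeff g = 0) (n : ℕ) :
    coeff n (f * g) = ∑ i ∈ Icc 1 (n - 1), coeff i f * coeff (n - i) g := by
  rw [coeff_mul, Nat.sum_antidiagonal_eq_sum_range_succ (fun i j => coeff i f * coeff j g)]
  refine (sum_subset (fun i hi => ?_) fun i hi hi' => ?_).symm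
  · simp only [mem_Icc, mem_range] at hi ⊢
    omega
  · simp only [mem_Icc, mem_range, not_and_or, not_le] at hi hi'
    obtain rfl | rfl : i = 0 ∨ i = n := by omega
    · simp [hf]
    · simp [hg]

theorem inv_one_sub_X {k : Type*} [Field k] : (1 - X : k⟦X⟧)⁻¹ = mk 1 :=
  (inv_eq_iff_mul_eq_one (by simp)).2 (mk_one_mul_one_sub_eq_one k)

theorem mk_sub_one_mul_one_sub_mk {d g : ℕ → R} (hd0 : d 0 = 0) (hg0 : g 0 = 1)
    (hg : ∀ n, 1 ≤ n → g n = 1 + ∑ i ∈ Icc 1 (n - 1), d i * g (n - i)) :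
    (mk g - 1) * (1 - mk d) = X * mk 1 := by
  have hconv : ∀ n, coeff n (mk d * (mk g - 1)) = ∑ i ∈ Icc 1 (n - 1), d i * g (n - i) := by
    intro n
    rw [coeff_mul_eq_sum_Icc_of_constantCoeff_eq_zero (by simp [hd0]) (by simp [hg0])]
    refine sum_congr rfl fun i hi => ?_
    have : n - i ≠ 0 := by simp only [mem_Icc] at hi; omega
    simp [this]
  ext (_ | n)
  · simp [hg0]
  · rw [mul_one_sub, mul_comm, map_sub, hconv, coeff_succ_X_mul]
    simp [hg (n + 1) n.succ_pos]

end PowerSeries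

theorem Aps_eq_one_add_X_mul_Bps (p : ℝ) : Aps p = 1 + X * Bps p := by
  ext (_ | n) <;> simp [Aps, Bps, coeff_succ_X_mul, coeff_one]

theorem Aps_sub_Bps_eq_mk (p : ℝ) :
    Aps p - Bps p = mk fun i => (1 - p) ^ i.choose 2 - (1 - p) ^ (i + 1).choose 2 := by
  ext n
  simp [Aps, Bps]

theorem stmt6_general (p : ℝ) (g : ℕ → ℝ)
    (hg0 : g 0 = 1) (hg1 : g 1 = 1)
    (hrec : ∀ n : ℕ, 2 ≤ n →
      g n = 1 + ∑ i ∈ Finset.Icc 1 (n - 1),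
        ((1 - p) ^ (i.choose 2) - (1 - p) ^ ((i + 1).choose 2)) * g (n - i)) :
    (PowerSeries.mk g - 1) * (1 - Aps p + Bps p) =
        PowerSeries.X * (1 - PowerSeries.X)⁻¹ ∧
      PowerSeries.mk g = 1 + PowerSeries.X * ((1 - PowerSeries.X) ^ 2 * Bps p)⁻¹ := by
  have hg : ∀ n, 1 ≤ n → g n = 1 + ∑ i ∈ Icc 1 (n - 1),
      ((1 - p) ^ (i.choose 2) - (1 - p) ^ ((i + 1).choose 2)) * g (n - i) := by
    intro n hn
    obtain rfl | hn := hn.eq_or_lt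
    · simp [hg1]
    · exact hrec n hn
  have h1 : (PowerSeries.mk g - 1) * (1 - Aps p + Bps p) = X * PowerSeries.mk 1 := by
    rw [sub_add, Aps_sub_Bps_eq_mk]
    exact mk_sub_one_mul_one_sub_mk (by simp) hg0 hg
  refine ⟨by rw [h1, inv_one_sub_X], ?_⟩
  rw [← sub_eq_iff_eq_add', eq_mul_inv_iff_mul_eq (by simp [Bps])]
  calc (PowerSeries.mk g - 1) * ((1 - X) ^ 2 * Bps p)
      = (PowerSeries.mk g - 1) * (1 - Aps p + Bps p) * (1 - X) := by
        rw [Aps_eq_one_add_X_mul_Bps]; ring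
    _ = X := by rw [h1, mul_assoc, mk_one_mul_one_sub_eq_one, mul_one]

/-- if `g` satisfies the stated recurrence, then its generating function
`G` satisfies `(G-1)(1 - A_p + B_p) = x/(1-x)` and `G = 1 + x/((1-x)² B_p)`. -/
theorem stmt6 (p : ℝ) (hp : p ∈ Set.Ioo (0 : ℝ) 1) (g : ℕ → ℝ)
    (hg0 : g 0 = 1) (hg1 : g 1 = 1)
    (hrec : ∀ n : ℕ, 2 ≤ n →
      g n = 1 + ∑ i ∈ Finset.Icc 1 (n - 1),
        ((1 - p) ^ (i.choose 2) - (1 - p) ^ ((i + 1).choose 2)) * g (n - i)) :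
    (PowerSeries.mk g - 1) * (1 - Aps p + Bps p) =
        PowerSeries.X * (1 - PowerSeries.X)⁻¹ ∧
      PowerSeries.mk g = 1 + PowerSeries.X * ((1 - PowerSeries.X) ^ 2 * Bps p)⁻¹ :=
  stmt6_general p g hg0 hg1 hrec
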